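/- The antisymmetrizer 𝔄_k ∈ A ⊗ A satisfies 𝔄_k·𝔄_k = 𝔄_k·(1 ⊗ t), where t = ∑_{w ∈ S_k} T_w·T_{w⁻¹}. -/

import Mathlib

/-- The number of inversions of a permutation `w` of `{0, …, k−1}`:
`ℓ(w) = #{(m,n) : m < n, w(m) > w(n)}`.  This equals the Coxeter length of `w`,
i.e. the minimal number of adjacent transpositions needed to express `w`. -/
def invNum {k : ℕ} (w : Equiv.Perm (Fin k)) : ℕ :=
  (Finset.univ.filter fun p : Fin k × Fin k => p.1 < p.2 ∧ w p.2 < w p.1).card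

/-- `s` is one of the adjacent transpositions `s_i = (i, i+1)`. -/
def IsAdjSwap {k : ℕ} (s : Equiv.Perm (Fin k)) : Prop :=
  ∃ (i : ℕ) (h : i + 1 < k), s = Equiv.swap ⟨i, Nat.lt_of_succ_lt h⟩ ⟨i + 1, h⟩

/-!
For an adjacent transposition `s`, the terms of `𝔄 = ∑ (-1)^ℓ(v) T_v⁻¹ ⊗ T_{v⁻¹}` indexed by `v`
and `s v` cancel against each other after multiplication by `1 ⊗ T_s + T_s⁻¹ ⊗ 1` (this is where
the quadratic relation `T_s² = c T_s + 1` enters), so `𝔄 (1 ⊗ T_s) = -𝔄 (T_s⁻¹ ⊗ 1)`. Peeling off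
generators along a reduced word gives `𝔄 (1 ⊗ T_v) = (-1)^ℓ(v) 𝔄 (T_v⁻¹ ⊗ 1)` for every `v`, and
then `𝔄 (1 ⊗ T_v T_{v⁻¹})` is exactly `𝔄` times the `v`-th term of `𝔄`.
-/

open Equiv

variable {k : ℕ}

theorem invNum_one : invNum (1 : Perm (Fin k)) = 0 := by
  rw [invNum, Finset.card_eq_zero, Finset.filter_eq_empty_iff]
  exact fun _ _ h => lt_asymm h.1 h.2

theorem invNum_inv (w : Perm (Fin k)) : invNum w⁻¹ = invNum w := by
  refine Finset.card_nbij' (fun p => (w⁻¹ p.2, w⁻¹ p.1)) (fun p => (w p.2, w p.1)) ?_ ?_ ?_ ?_ <;>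
    intro p <;> simp +contextual

theorem swap_apply_lt_swap_apply_iff {a b x y : Fin k} (hab : (b : ℕ) = a + 1) :
    swap a b x < swap a b y ↔ x < y ∧ ¬(x = a ∧ y = b) ∨ x = b ∧ y = a := by
  simp only [swap_apply_def]
  split_ifs <;> simp only [Fin.lt_def, Fin.ext_iff] at * <;> omega

theorem invNum_swap_mul_of_lt {a b : Fin k} (hab : (b : ℕ) = a + 1) {v : Perm (Fin k)}
    (hv : v⁻¹ a < v⁻¹ b) : invNum (swap a b * v) = invNum v + 1 := by
  have hinv : ∀ x y, v x = y ↔ x = v⁻¹ y := fun x y => Perm.eq_inv_iff_eq.symm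
  rw [invNum, invNum, ← Finset.card_insert_of_notMem (a := (v⁻¹ a, v⁻¹ b))]
  · congr 1
    ext ⟨m, n⟩
    simp only [Finset.mem_filter, Finset.mem_univ, true_and, Finset.mem_insert, Prod.mk.injEq,
      Perm.mul_apply, swap_apply_lt_swap_apply_iff hab, hinv]
    grind
  · simp [Fin.le_def, hab]

theorem invNum_swap_mul_of_gt {a b : Fin k} (hab : (b : ℕ) = a + 1) {v : Perm (Fin k)}
    (hv : v⁻¹ b < v⁻¹ a) : invNum (swap a b * v) + 1 = invNum v := by
  have h := invNum_swap_mul_of_lt hab (v := swap a b * v) (by simpa using hv)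
  rwa [← mul_assoc, swap_mul_self, one_mul, eq_comm] at h

namespace IsAdjSwap

variable {s : Perm (Fin k)} (hs : IsAdjSwap s)
include hs

theorem mul_self : s * s = 1 := by
  obtain ⟨i, h, rfl⟩ := hs
  exact swap_mul_self _ _

theorem inv_eq : s⁻¹ = s := by
  obtain ⟨i, h, rfl⟩ := hs
  exact swap_inv _ _

theorem invNum_eq : invNum s = 1 := by
  obtain ⟨i, h, rfl⟩ := hs
  simpa [invNum_one] using invNum_swap_mul_of_lt (v := 1) (rfl : i + 1 = i + 1)
    (by simp [Fin.lt_def])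

theorem invNum_mul_left (v : Perm (Fin k)) :
    invNum (s * v) = invNum v + 1 ∨ invNum (s * v) + 1 = invNum v := by
  obtain ⟨i, h, rfl⟩ := hs
  have hne : v⁻¹ ⟨i, by omega⟩ ≠ v⁻¹ ⟨i + 1, h⟩ := v⁻¹.injective.ne (by simp [Fin.ext_iff])
  rcases hne.lt_or_gt with hv | hv
  · exact .inl (invNum_swap_mul_of_lt rfl hv)
  · exact .inr (invNum_swap_mul_of_gt rfl hv)

theorem invNum_mul_right (v : Perm (Fin k)) :
    invNum (v * s) = invNum v + 1 ∨ invNum (v * s) + 1 = invNum v := by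
  simpa only [← invNum_inv (v * s), mul_inv_rev, hs.inv_eq, invNum_inv] using
    hs.invNum_mul_left v⁻¹

end IsAdjSwap

theorem exists_isAdjSwap_invNum_mul_lt {w : Perm (Fin k)} (hw : w ≠ 1) :
    ∃ s, IsAdjSwap s ∧ invNum (s * w) < invNum w := by
  by_contra! hno
  have hmono : StrictMono ⇑w⁻¹ := by
    cases k with
    | zero => exact fun a => a.elim0
    | succ n =>
      refine Fin.strictMono_iff_lt_succ.2 fun i => ?_
      refine (lt_or_gt_of_ne (w⁻¹.injective.ne Fin.castSucc_lt_succ.ne)).resolve_right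
        fun hgt => ?_
      have := invNum_swap_mul_of_gt (a := i.castSucc) (b := i.succ) (by simp) hgt
      exact (hno (swap i.castSucc i.succ) ⟨i, i.succ.isLt, rfl⟩).not_gt (by omega)
  exact hw (inv_eq_one.1 (Perm.ext fun _ => hmono.apply_eq))

@[elab_as_elim]
theorem induction_on_adjSwap_mul {P : Perm (Fin k) → Prop} (one : P 1)
    (mul : ∀ s u, IsAdjSwap s → invNum u < invNum (s * u) → P u → P (s * u))
    (w : Perm (Fin k)) : P w := by
  induction h : invNum w using Nat.strong_induction_on generalizing w with
  | _ n ih =>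
    by_cases hw : w = 1
    · exact hw ▸ one
    obtain ⟨s, hs, hlt⟩ := exists_isAdjSwap_invNum_mul_lt hw
    have hssw : s * (s * w) = w := by rw [← mul_assoc, hs.mul_self, one_mul]
    simpa only [hssw] using
      mul s (s * w) hs (by rwa [hssw]) (ih _ (h ▸ hlt) _ rfl)

variable {R A : Type*} [CommRing R] [Ring A] [Algebra R A]

/-- The defining relations of the Iwahori–Hecke algebra `H_k(q)`, with `c` in the role of
`q - q⁻¹`. -/
structure SatisfiesHeckeRelations (c : R) (T : Perm (Fin k) → A) : Prop where
  map_one : T 1 = 1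
  mul_of_lt : ∀ s w, IsAdjSwap s → invNum w < invNum (s * w) → T s * T w = T (s * w)
  mul_of_gt : ∀ s w, IsAdjSwap s → invNum (s * w) < invNum w → T s * T w = c • T w + T (s * w)

namespace SatisfiesHeckeRelations

variable {c : R} {T : Perm (Fin k) → A} (hT : SatisfiesHeckeRelations c T)
  {s : Perm (Fin k)} (hs : IsAdjSwap s)
include hT hs

theorem mul_self : T s * T s = c • T s + 1 := by
  have h := hT.mul_of_gt s s hs (by rw [hs.mul_self, invNum_one, hs.invNum_eq]; exact one_pos)
  rwa [hs.mul_self, hT.map_one] at h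

theorem inverse_eq : Ring.inverse (T s) = T s - c • 1 := by
  have hmul : T s * (T s - c • 1) = 1 := by
    rw [mul_sub, hT.mul_self hs, mul_smul_comm, mul_one, add_sub_cancel_left]
  have hmul' : (T s - c • 1) * T s = 1 := by
    rw [sub_mul, hT.mul_self hs, smul_mul_assoc, one_mul, add_sub_cancel_left]
  exact Ring.inverse_unit ⟨T s, T s - c • 1, hmul, hmul'⟩

theorem isUnit : IsUnit (T s) := by
  rw [Ring.isUnit_iff_mul_inverse_cancel, hT.inverse_eq hs, mul_sub, hT.mul_self hs,
    mul_smul_comm, mul_one, add_sub_cancel_left]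

theorem inverse_mul_self :
    Ring.inverse (T s) * Ring.inverse (T s) = 1 - c • Ring.inverse (T s) := by
  rw [hT.inverse_eq hs]
  simp only [sub_mul, mul_sub, hT.mul_self hs, smul_mul_assoc, mul_smul_comm, one_mul, mul_one,
    smul_sub]
  module

theorem mul_of_lt_right {v : Perm (Fin k)} (hv : invNum v < invNum (v * s)) :
    T v * T s = T (v * s) := by
  induction v using induction_on_adjSwap_mul with
  | one => rw [hT.map_one, one_mul, one_mul]
  | mul s' u hs' hu ih =>
    have := hs.invNum_mul_right u
    have := hs'.invNum_mul_left u
    have := hs'.invNum_mul_left (u * s)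
    rw [mul_assoc] at hv ⊢
    rw [← hT.mul_of_lt s' u hs' hu, mul_assoc, ih (by omega),
      hT.mul_of_lt s' _ hs' (by omega)]

theorem mul_of_gt_right {v : Perm (Fin k)} (hv : invNum (v * s) < invNum v) :
    T v * T s = c • T v + T (v * s) := by
  have hvss : v * s * s = v := by rw [mul_assoc, hs.mul_self, mul_one]
  have h := hT.mul_of_lt_right hs (v := v * s) (by rwa [hvss])
  rw [hvss] at h
  rw [← h, mul_assoc, hT.mul_self hs, mul_add, mul_smul_comm, mul_one, h]

end SatisfiesHeckeRelations

open TensorProduct Algebra.TensorProduct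

variable (R) in
noncomputable def antisymmetrizerTerm (T : Perm (Fin k) → A) (v : Perm (Fin k)) : A ⊗[R] A :=
  (-1 : R) ^ invNum v • (Ring.inverse (T v) ⊗ₜ[R] T v⁻¹)

variable (R) in
noncomputable def antisymmetrizer (T : Perm (Fin k) → A) : A ⊗[R] A :=
  ∑ v, antisymmetrizerTerm R T v

namespace SatisfiesHeckeRelations

variable {c : R} {T : Perm (Fin k) → A} (hT : SatisfiesHeckeRelations c T)
include hT

theorem antisymmetrizerTerm_mul_add_antisymmetrizerTerm_mul {s v : Perm (Fin k)}
    (hs : IsAdjSwap s) (hv : invNum v < invNum (s * v)) :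
    antisymmetrizerTerm R T v * (1 ⊗ₜ T s + Ring.inverse (T s) ⊗ₜ 1) +
      antisymmetrizerTerm R T (s * v) * (1 ⊗ₜ T s + Ring.inverse (T s) ⊗ₜ 1) = 0 := by
  have hlen : invNum (s * v) = invNum v + 1 := by have := hs.invNum_mul_left v; omega
  set u := s * v with hu
  have hu_inv : u⁻¹ = v⁻¹ * s := by rw [hu, mul_inv_rev, hs.inv_eq]
  have hus : u⁻¹ * s = v⁻¹ := by rw [hu_inv, mul_assoc, hs.mul_self, mul_one]
  have h1 : T v⁻¹ * T s = T u⁻¹ := by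
    rw [hT.mul_of_lt_right hs (by rw [← hu_inv, invNum_inv, invNum_inv]; omega), hu_inv]
  have h2 : T u⁻¹ * T s = c • T u⁻¹ + T v⁻¹ := by
    rw [hT.mul_of_gt_right hs (by rw [hus, invNum_inv, invNum_inv]; omega), hus]
  have h3 : Ring.inverse (T v) * Ring.inverse (T s) = Ring.inverse (T u) := by
    rw [hu, ← hT.mul_of_lt s v hs hv, Ring.inverse_mul (.inl (hT.isUnit hs))]
  have h4 : Ring.inverse (T u) * Ring.inverse (T s) =
      Ring.inverse (T v) - c • Ring.inverse (T u) := by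
    rw [← h3, mul_assoc, hT.inverse_mul_self hs, mul_sub, mul_one, mul_smul_comm]
  simp only [antisymmetrizerTerm, mul_add, smul_mul_assoc, tmul_mul_tmul, mul_one,
    h1, h2, h3, h4, hlen, pow_succ]
  simp only [tmul_add, sub_tmul, tmul_smul, ← smul_tmul']
  module

theorem antisymmetrizer_mul_eq_zero {s : Perm (Fin k)} (hs : IsAdjSwap s) :
    antisymmetrizer R T * (1 ⊗ₜ T s + Ring.inverse (T s) ⊗ₜ 1) = 0 := by
  rw [antisymmetrizer, Finset.sum_mul]
  refine Finset.sum_ninvolution (s * ·) (fun v => ?_) (fun v _ hfix => ?_)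
    (fun _ => Finset.mem_univ _) (fun v => by rw [← mul_assoc, hs.mul_self, one_mul])
  · rcases hs.invNum_mul_left v with h | h
    · exact hT.antisymmetrizerTerm_mul_add_antisymmetrizerTerm_mul hs (by omega)
    · have := hT.antisymmetrizerTerm_mul_add_antisymmetrizerTerm_mul hs (v := s * v)
        (by rw [← mul_assoc, hs.mul_self, one_mul]; omega)
      rwa [← mul_assoc, hs.mul_self, one_mul, add_comm] at this
  · have := congrArg invNum hfix
    have := hs.invNum_mul_left v
    omega

theorem antisymmetrizer_mul_one_tmul (v : Perm (Fin k)) :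
    antisymmetrizer R T * (1 ⊗ₜ T v) =
      (-1 : R) ^ invNum v • (antisymmetrizer R T * (Ring.inverse (T v) ⊗ₜ 1)) := by
  induction v using induction_on_adjSwap_mul with
  | one => rw [hT.map_one, Ring.inverse_one, invNum_one, pow_zero, one_smul]
  | mul s u hs hu ih =>
    have hlen : invNum (s * u) = invNum u + 1 := by have := hs.invNum_mul_left u; omega
    have hTsu : T (s * u) = T s * T u := (hT.mul_of_lt s u hs hu).symm
    have hs_anti : antisymmetrizer R T * (1 ⊗ₜ T s) =
        -(antisymmetrizer R T * (Ring.inverse (T s) ⊗ₜ 1)) :=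
      eq_neg_of_add_eq_zero_left (by rw [← mul_add, hT.antisymmetrizer_mul_eq_zero hs])
    have hcomm : (Ring.inverse (T s) ⊗ₜ[R] (1 : A)) * (1 ⊗ₜ T u) =
        (1 ⊗ₜ T u) * (Ring.inverse (T s) ⊗ₜ[R] (1 : A)) := by
      simp only [tmul_mul_tmul, mul_one, one_mul]
    calc antisymmetrizer R T * (1 ⊗ₜ T (s * u))
        = antisymmetrizer R T * (1 ⊗ₜ T s) * (1 ⊗ₜ T u) := by
          rw [hTsu, mul_assoc, tmul_mul_tmul, one_mul]
      _ = -(antisymmetrizer R T * (1 ⊗ₜ T u) * (Ring.inverse (T s) ⊗ₜ 1)) := by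
          rw [hs_anti, neg_mul, mul_assoc, hcomm, ← mul_assoc]
      _ = (-1 : R) ^ invNum (s * u) •
            (antisymmetrizer R T * (Ring.inverse (T (s * u)) ⊗ₜ 1)) := by
          rw [ih, hlen, pow_succ, hTsu, Ring.inverse_mul (.inl (hT.isUnit hs)), smul_mul_assoc,
            mul_assoc, tmul_mul_tmul, one_mul, mul_neg_one, neg_smul]

theorem antisymmetrizer_mul_self :
    antisymmetrizer R T * antisymmetrizer R T =
      antisymmetrizer R T * (1 ⊗ₜ ∑ w, T w * T w⁻¹) := by
  rw [tmul_sum, Finset.mul_sum]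
  refine (Finset.mul_sum _ _ _).trans (Finset.sum_congr rfl fun v _ => ?_)
  calc antisymmetrizer R T * antisymmetrizerTerm R T v
      = (-1 : R) ^ invNum v • (antisymmetrizer R T * (Ring.inverse (T v) ⊗ₜ 1)) *
          (1 ⊗ₜ T v⁻¹) := by
        rw [antisymmetrizerTerm, mul_smul_comm, smul_mul_assoc, mul_assoc, tmul_mul_tmul,
          mul_one, one_mul]
    _ = antisymmetrizer R T * (1 ⊗ₜ (T v * T v⁻¹)) := by
      rw [← hT.antisymmetrizer_mul_one_tmul, mul_assoc, tmul_mul_tmul, one_mul]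

end SatisfiesHeckeRelations

open TensorProduct in
theorem heckeAlgebra_antisymmetrizer_sq_general
    (k : ℕ) (q : ℂ)
    (A : Type) [Ring A] [Algebra ℂ A]
    (T : Module.Basis (Equiv.Perm (Fin k)) ℂ A)
    (hT1 : T 1 = 1)
    (hTlt : ∀ s w : Equiv.Perm (Fin k), IsAdjSwap s → invNum w < invNum (s * w) →
      T s * T w = T (s * w))
    (hTgt : ∀ s w : Equiv.Perm (Fin k), IsAdjSwap s → invNum (s * w) < invNum w →
      T s * T w = (q - q⁻¹) • T w + T (s * w)) :
    (∑ v : Equiv.Perm (Fin k),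
        ((-1 : ℂ)) ^ invNum v • (Ring.inverse (T v) ⊗ₜ[ℂ] T v⁻¹)) *
      (∑ v : Equiv.Perm (Fin k),
        ((-1 : ℂ)) ^ invNum v • (Ring.inverse (T v) ⊗ₜ[ℂ] T v⁻¹)) =
    (∑ v : Equiv.Perm (Fin k),
        ((-1 : ℂ)) ^ invNum v • (Ring.inverse (T v) ⊗ₜ[ℂ] T v⁻¹)) *
      ((1 : A) ⊗ₜ[ℂ] (∑ w : Equiv.Perm (Fin k), T w * T w⁻¹)) :=
  (SatisfiesHeckeRelations.mk hT1 hTlt hTgt).antisymmetrizer_mul_self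

open TensorProduct in
/-- The antisymmetrizer `𝔄_k = ∑_{w} (−1)^{ℓ(w)} T_w⁻¹ ⊗ T_{w⁻¹} ∈ A ⊗ A` satisfies
`𝔄_k · 𝔄_k = 𝔄_k · (1 ⊗ t)` where `t = ∑_{w ∈ S_k} T_w · T_{w⁻¹}`. -/
theorem heckeAlgebra_antisymmetrizer_sq
    (k : ℕ) (hk : 1 ≤ k) (q : ℂ) (hq : q ≠ 0)
    (A : Type) [Ring A] [Algebra ℂ A]
    (T : Module.Basis (Equiv.Perm (Fin k)) ℂ A)
    (hT1 : T 1 = 1)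
    (hTlt : ∀ s w : Equiv.Perm (Fin k), IsAdjSwap s → invNum w < invNum (s * w) →
      T s * T w = T (s * w))
    (hTgt : ∀ s w : Equiv.Perm (Fin k), IsAdjSwap s → invNum (s * w) < invNum w →
      T s * T w = (q - q⁻¹) • T w + T (s * w))
    (hUnit : ∀ w : Equiv.Perm (Fin k), IsUnit (T w)) :
    (∑ v : Equiv.Perm (Fin k),
        ((-1 : ℂ)) ^ invNum v • (Ring.inverse (T v) ⊗ₜ[ℂ] T v⁻¹)) *
      (∑ v : Equiv.Perm (Fin k),
        ((-1 : ℂ)) ^ invNum v • (Ring.inverse (T v) ⊗ₜ[ℂ] T v⁻¹)) =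
    (∑ v : Equiv.Perm (Fin k),
        ((-1 : ℂ)) ^ invNum v • (Ring.inverse (T v) ⊗ₜ[ℂ] T v⁻¹)) *
      ((1 : A) ⊗ₜ[ℂ] (∑ w : Equiv.Perm (Fin k), T w * T w⁻¹)) :=
  heckeAlgebra_antisymmetrizer_sq_general k q A T hT1 hTlt hTgt
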